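/- For the ECO-system with axiom (2) and rules (2) ↝ (2)(3), (k) ↝ (k-1)(k)^{k-2}(k+1) for k ≥ 3, viewed (after the shift k → k-2) as a walk on ℕ with rules (0) ↝ (0)(1), (k) ↝ (k-1)(k)^k(k+1), the generating function F(z,0) of excursions (walks returning to 0) satisfies F(z,0) = 1/(1 - z - z²B(z)) where B(z) = 1 + z + 2z² + 5z³ + 14z⁴ + 43z⁵ + ... is the generating function of Bessel numbers counting non-overlapping partitions; equivalently F(z,0) has the continued fraction expansion 1/(1 - z - z²/(1 - z - z²/(1 - 2z - z²/(1 - 3z - ...)))). -/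

import Mathlib

/-!
Let `E j` be the generating function of excursions from level `j` that never go below `j`.
Decomposing at the first step, and after an up-step at the first return to `j`, gives
`E j = 1 + b_j z E j + z² E (j+1) E j`, i.e. `E j = 1/(1 - b_j z - z² E (j+1))`.
A walk from `0` to `k` factors at its last visits to `0, …, k - 1`, so its generating function is
`z^k E 0 ⋯ E k`. These products satisfy the same one-step recursion as `f`, hence
`∑ f n 0 zⁿ = E 0`.
-/

open PowerSeries Finset

namespace LevelWalk

variable {R : Type*} [CommSemiring R] (b : ℕ → R)

def excursionCoeff : ℕ → ℕ → R
  | 0, _ => 1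
  | n + 1, j => b j * excursionCoeff n j +
      ∑ a : Fin n, excursionCoeff a (j + 1) * excursionCoeff (n - 1 - a) j
  decreasing_by all_goals omega

theorem excursionCoeff_zero (j : ℕ) : excursionCoeff b 0 j = 1 := by
  rw [excursionCoeff]

theorem excursionCoeff_succ (n j : ℕ) : excursionCoeff b (n + 1) j =
    b j * excursionCoeff b n j +
      ∑ a ∈ range n, excursionCoeff b a (j + 1) * excursionCoeff b (n - 1 - a) j := by
  rw [excursionCoeff, Fin.sum_univ_eq_sum_range
    (fun a => excursionCoeff b a (j + 1) * excursionCoeff b (n - 1 - a) j)]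

noncomputable def excursionSeries (j : ℕ) : R⟦X⟧ := mk fun n => excursionCoeff b n j

theorem excursionSeries_eq (j : ℕ) :
    excursionSeries b j =
      1 + C (b j) * X * excursionSeries b j +
        X ^ 2 * (excursionSeries b (j + 1) * excursionSeries b j) := by
  ext (_ | n)
  · simp [excursionSeries, excursionCoeff_zero]
  · simp only [map_add, coeff_one, mul_assoc, coeff_C_mul, coeff_succ_X_mul, coeff_X_pow_mul']
    rw [coeff_mul, Nat.sum_antidiagonal_eq_sum_range_succ_mk]
    rcases n with _ | n <;> simp [excursionSeries, excursionCoeff_succ]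

theorem excursionSeries_mul_eq_one {R : Type*} [CommRing R] (b : ℕ → R) (j : ℕ) :
    excursionSeries b j * (1 - C (b j) * X - X ^ 2 * excursionSeries b (j + 1)) = 1 := by
  linear_combination excursionSeries_eq b j

noncomputable def walkSeries (k : ℕ) : R⟦X⟧ := X ^ k * ∏ i ∈ range (k + 1), excursionSeries b i

theorem walkSeries_zero : walkSeries b 0 = excursionSeries b 0 := by
  simp [walkSeries]

theorem walkSeries_eq (k : ℕ) :
    walkSeries b k = (if k = 0 then 1 else 0) + X * walkSeries b (k + 1) +
      C (b k) * X * walkSeries b k + (if 1 ≤ k then X * walkSeries b (k - 1) else 0) := by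
  rcases k with _ | k
  · simp only [walkSeries, prod_range_succ, prod_range_zero]
    nth_rewrite 1 [excursionSeries_eq b 0]
    rw [if_pos trivial, if_neg (by omega)]
    ring
  · simp only [walkSeries, prod_range_succ (n := k + 1), prod_range_succ (n := k + 2)]
    nth_rewrite 1 [excursionSeries_eq b (k + 1)]
    rw [if_neg (by omega), if_pos (by omega), Nat.add_sub_cancel]
    ring

theorem coeff_walkSeries (g : ℕ → ℕ → R) (h0 : ∀ k, g 0 k = if k = 0 then 1 else 0)
    (hstep : ∀ n k, g (n + 1) k =
      g n (k + 1) + b k * g n k + (if 1 ≤ k then g n (k - 1) else 0)) (n k : ℕ) :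
    coeff n (walkSeries b k) = g n k := by
  induction n generalizing k with
  | zero =>
    rcases k with _ | k
    · simp [walkSeries, excursionSeries, excursionCoeff_zero, h0]
    · simp [walkSeries, h0]
  | succ n ih =>
    rw [walkSeries_eq, hstep]
    split_ifs <;> simp [coeff_succ_X_mul, mul_assoc, *]

end LevelWalk

open LevelWalk

/-- the Bessel ECO-system, as the walk on ℕ with rules (0) ↝ (0)(1),
(k) ↝ (k-1)(k)^k(k+1). The generating function F(z,0) = ∑ f n 0 z^n of excursions has
the continued fraction expansion 1/(1 - b_0 z - z²/(1 - b_1 z - z²/(…))) with b_0 = 1,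
b_j = j (j ≥ 1): i.e. there are tails E j with E j = 1/(1 - b_j z - z² E (j+1)),
E 0 = F(z,0); in particular F(z,0) = 1/(1 - z - z²B(z)) where B = E 1 is the
generating function 1 + z + 2z² + 5z³ + 14z⁴ + 43z⁵ + 143z⁶ + … of Bessel numbers. -/
theorem stmt_19 (f : ℕ → ℕ → ℕ)
    (h0 : ∀ k, f 0 k = if k = 0 then 1 else 0)
    (hstep : ∀ n k, f (n + 1) k =
      f n (k + 1) + max k 1 * f n k + (if 1 ≤ k then f n (k - 1) else 0)) :
    ∃ E : ℕ → PowerSeries ℚ,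
      (∀ j, E j * (1 - C ((max j 1 : ℕ) : ℚ) * X - X ^ 2 * E (j + 1)) = 1) ∧
      mk (fun n => (f n 0 : ℚ)) = E 0 ∧
      (E 0) * (1 - X - X ^ 2 * E 1) = 1 ∧
      coeff 0 (E 1) = 1 ∧ coeff 1 (E 1) = 1 ∧ coeff 2 (E 1) = 2 ∧
      coeff 3 (E 1) = 5 ∧ coeff 4 (E 1) = 14 ∧ coeff 5 (E 1) = 43 ∧
      coeff 6 (E 1) = 143 := by
  set b : ℕ → ℚ := fun j => ((max j 1 : ℕ) : ℚ)
  have hwalk : ∀ n, coeff n (walkSeries b 0) = f n 0 := fun n =>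
    coeff_walkSeries b (fun n k => (f n k : ℚ)) (by simp [h0])
      (fun n k => by rw [hstep]; split_ifs <;> simp [b]) n 0
  refine ⟨excursionSeries b, excursionSeries_mul_eq_one b, ?_, ?_, ?_⟩
  · ext n
    rw [coeff_mk, ← hwalk, walkSeries_zero]
  · simpa [b] using excursionSeries_mul_eq_one b 0
  · norm_num [excursionSeries, excursionCoeff_succ, excursionCoeff_zero, sum_range_succ, b]
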